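/- arXiv:2501.08256 — 4 statements merged into one kernel-verified Lean document; each statement's English description precedes it below -/
import Mathlib

section
/- Let (γ_n) be a sequence of positive reals with ∑γ_n = ∞ and γ_n → 0, and let (y_n) be a sequence in ℝ^d such that for every ε > 0 there exist δ > 0 and N with |∑_{k=n}^m y_k| < ε whenever N ≤ n ≤ m and ∑_{k=n}^m γ_k < δ. Define f_1 piecewise constant with f_1(t) = ∑_{i=1}^k y_i on [t_{k-1}, t_k), t_n = ∑_{k=1}^n γ_k, and f_n(t) = f_1(t + t_{n-1}). Then for every ε > 0 and T > 0 there exists δ > 0 such that limsup_{n→∞} |f_n(t) - f_n(s)| < ε whenever |t-s| < δ and s,t ≤ T. -/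
/-!
Write `t k = γ 1 + ⋯ + γ k` and `S k = y 1 + ⋯ + y k`, so that `f 1 = S (k + 1)` on
`[t k, t (k + 1))` and `f n s = f 1 (s + t (n - 1))`. If `s ≤ u` and `s + t (n - 1)`,
`u + t (n - 1)` lie in the windows of indices `j ≤ k`, then `f n u - f n s` is the block
sum `y (j + 2) + ⋯ + y (k + 1)`, whose `γ`-weight is at most `(u - s) + γ (k + 1)`.
Since `k ≥ j ≥ n - 1` and `γ → 0`, for large `n` this weight is below the `δ` of the
hypothesis, so the block sum is small for all large `n`, uniformly in `s` and `u`.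
-/

open Filter Finset

theorem exists_le_and_lt_succ_of_lt {α : Type*} [LinearOrder α] {t : ℕ → α} {x : α}
    (h0 : t 0 ≤ x) {n : ℕ} (hn : x < t n) : ∃ k, t k ≤ x ∧ x < t (k + 1) := by
  induction n with
  | zero => exact absurd h0 (not_le.mpr hn)
  | succ n ih =>
    rcases lt_or_ge x (t n) with hxn | hxn
    · exact ih hxn
    · exact ⟨n, hxn, hn⟩

theorem StrictMono.le_of_le_of_lt_succ {α : Type*} [LinearOrder α] {t : ℕ → α}
    (ht : StrictMono t) {a b : α} {j k : ℕ} (hja : t j ≤ a) (hab : a ≤ b)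
    (hbk : b < t (k + 1)) : j ≤ k :=
  Nat.lt_succ_iff.mp (ht.lt_iff_lt.mp ((hja.trans hab).trans_lt hbk))

theorem sum_Icc_one_sub_sum_Icc_one {M : Type*} [AddCommGroup M] (f : ℕ → M) {j k : ℕ}
    (hjk : j ≤ k) : ∑ i ∈ Icc 1 k, f i - ∑ i ∈ Icc 1 j, f i = ∑ i ∈ Ioc j k, f i := by
  have hIcc (n : ℕ) : Icc 1 n = Ioc 0 n := Icc_add_one_left_eq_Ioc 0 n
  rw [hIcc, hIcc, ← sum_Ioc_consecutive f (Nat.zero_le j) hjk, add_sub_cancel_left]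

theorem exists_norm_step_sub_lt {E : Type*} [SeminormedAddCommGroup E] {t : ℕ → ℝ}
    {S : ℕ → E} {g : ℝ → E} (ht : StrictMono t) (htop : Tendsto t atTop atTop)
    (hgap : Tendsto (fun k => t (k + 1) - t k) atTop (nhds 0))
    (hS : ∀ ε > (0 : ℝ), ∃ δ > (0 : ℝ), ∃ N : ℕ, ∀ j k : ℕ, N ≤ j → j ≤ k →
      t k - t j < δ → ‖S k - S j‖ < ε)
    (hg : ∀ k x, t k ≤ x → x < t (k + 1) → g x = S (k + 1)) :
    ∀ ε > (0 : ℝ), ∃ δ > (0 : ℝ), ∃ M : ℕ, ∀ m ≥ M, ∀ a b : ℝ, t m ≤ a → a ≤ b →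
      b - a < δ → ‖g b - g a‖ < ε := by
  intro ε hε
  obtain ⟨δ, hδ, N, hN⟩ := hS ε hε
  obtain ⟨K, hK⟩ := eventually_atTop.mp (hgap.eventually_lt_const (half_pos hδ))
  refine ⟨δ / 2, half_pos hδ, max N K, fun m hm a b hma hab hba => ?_⟩
  have hsteps (x : ℝ) (hx : t m ≤ x) : ∃ k, m ≤ k ∧ t k ≤ x ∧ x < t (k + 1) := by
    obtain ⟨n, hxn⟩ := (htop.eventually_gt_atTop x).exists
    obtain ⟨k, hkx, hxk⟩ :=
      exists_le_and_lt_succ_of_lt ((ht.monotone (Nat.zero_le m)).trans hx) hxn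
    exact ⟨k, ht.le_of_le_of_lt_succ le_rfl hx hxk, hkx, hxk⟩
  obtain ⟨j, hmj, hja, haj⟩ := hsteps a hma
  obtain ⟨k, hmk, hkb, hbk⟩ := hsteps b (hma.trans hab)
  have hjk : j ≤ k := ht.le_of_le_of_lt_succ hja hab hbk
  have hgapk : t (k + 1) - t k < δ / 2 := hK k (by omega)
  rw [hg k b hkb hbk, hg j a hja haj]
  exact hN (j + 1) (k + 1) (by omega) (by omega) (by linarith)

theorem exists_norm_sum_Icc_one_sub_lt {E : Type*} [SeminormedAddCommGroup E]
    {γ : ℕ → ℝ} {y : ℕ → E}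
    (hy : ∀ ε > (0:ℝ), ∃ δ > (0:ℝ), ∃ N : ℕ, ∀ n m : ℕ, N ≤ n → n ≤ m →
      (∑ k ∈ Icc n m, γ k) < δ → ‖∑ k ∈ Icc n m, y k‖ < ε) :
    ∀ ε > (0 : ℝ), ∃ δ > (0 : ℝ), ∃ N : ℕ, ∀ j k : ℕ, N ≤ j → j ≤ k →
      ∑ i ∈ Icc 1 k, γ i - ∑ i ∈ Icc 1 j, γ i < δ →
      ‖∑ i ∈ Icc 1 k, y i - ∑ i ∈ Icc 1 j, y i‖ < ε := by
  intro ε hε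
  obtain ⟨δ, hδ, N, hN⟩ := hy ε hε
  refine ⟨δ, hδ, N, fun j k hNj hjk hsum => ?_⟩
  rw [sum_Icc_one_sub_sum_Icc_one γ hjk] at hsum
  rw [sum_Icc_one_sub_sum_Icc_one y hjk]
  rcases hjk.eq_or_lt with rfl | hlt
  · simpa using hε
  · rw [← Icc_add_one_left_eq_Ioc] at hsum ⊢
    exact hN (j + 1) k (by omega) hlt hsum

/-- (ii) ⟹ (i): smallness of partial sums over short time windows implies
equicontinuity in the extended sense of the shifted interpolations. -/
theorem stmt1 (d : ℕ) (γ : ℕ → ℝ) (y : ℕ → EuclideanSpace ℝ (Fin d))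
    (hγpos : ∀ n, 0 < γ n)
    (hγdiv : Tendsto (fun n => ∑ k ∈ Finset.Icc 1 n, γ k) atTop atTop)
    (hγ0 : Tendsto γ atTop (nhds 0))
    (hy : ∀ ε > (0:ℝ), ∃ δ > (0:ℝ), ∃ N : ℕ, ∀ n m : ℕ, N ≤ n → n ≤ m →
      (∑ k ∈ Finset.Icc n m, γ k) < δ → ‖∑ k ∈ Finset.Icc n m, y k‖ < ε)
    (t : ℕ → ℝ) (ht : ∀ n, t n = ∑ k ∈ Finset.Icc 1 n, γ k)
    (f : ℕ → ℝ → EuclideanSpace ℝ (Fin d))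
    (hf1 : ∀ k, 1 ≤ k → ∀ s : ℝ, t (k - 1) ≤ s → s < t k →
      f 1 s = ∑ i ∈ Finset.Icc 1 k, y i)
    (hfn : ∀ n, 1 ≤ n → ∀ s : ℝ, f n s = f 1 (s + t (n - 1))) :
    ∀ ε > (0:ℝ), ∀ T > (0:ℝ), ∃ δ > (0:ℝ), ∀ s u : ℝ, 0 ≤ s → 0 ≤ u →
      s ≤ T → u ≤ T → |u - s| < δ →
      Filter.limsup (fun n => ‖f n u - f n s‖) atTop < ε := by
  have hgap (k : ℕ) : t (k + 1) - t k = γ (k + 1) := by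
    rw [ht, ht, sum_Icc_succ_top (by omega), add_sub_cancel_left]
  have htop : Tendsto t atTop atTop := by rwa [funext ht]
  have hS := exists_norm_sum_Icc_one_sub_lt hy
  simp only [← ht] at hS
  have hmono : StrictMono t := strictMono_nat_of_lt_succ fun k => by
    linarith [hgap k, hγpos (k + 1)]
  intro ε hε T _
  obtain ⟨δ, hδ, M, hM⟩ := exists_norm_step_sub_lt hmono htop
    (by simpa only [hgap] using (tendsto_add_atTop_iff_nat 1).mpr hγ0) hS
    (fun k x => hf1 (k + 1) (by omega) x) (ε / 2) (half_pos hε)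
  refine ⟨δ, hδ, fun s u hs hu _ _ hdist => ?_⟩
  have hsmall : ∀ᶠ n in atTop, ‖f n u - f n s‖ ≤ ε / 2 := by
    filter_upwards [eventually_ge_atTop (M + 1)] with n hn
    rw [hfn n (by omega), hfn n (by omega)]
    rcases le_total s u with hsu | hus
    · exact (hM (n - 1) (by omega) _ _ (by linarith) (by linarith)
        (by linarith [le_abs_self (u - s), hdist])).le
    · rw [norm_sub_rev]
      exact (hM (n - 1) (by omega) _ _ (by linarith) (by linarith)
        (by linarith [neg_abs_le (u - s), hdist])).le
  calc limsup (fun n => ‖f n u - f n s‖) atTop ≤ ε / 2 :=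
        limsup_le_of_le (isCoboundedUnder_le_of_le atTop fun n => norm_nonneg _) hsmall
    _ < ε := half_lt_self hε
end

section
/- Let (γ_n) be positive with γ_n → 0 and ∑γ_n = ∞, let (u_n) be a sequence in ℝ^d with ∑ γ_n u_n convergent and γ_n |u_n| → 0, and let K = ∏_{i=1}^d [a_i,b_i] be a hyperrectangle. Define x_{n+1} = Π_K(x_n + γ_n u_n) with x_1 ∈ K, and let P_n = x_n + γ_n u_n - x_{n+1} be the projection residuals. Then for every ε > 0 there exist δ > 0 and N ∈ ℕ such that |∑_{k=n}^m P_k| < ε whenever N ≤ n ≤ m and ∑_{k=n}^m γ_k < δ. -/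
/-!
Summing the residuals telescopes: `∑_{k=n}^m P_k = ∑_{k=n}^m γ_k u_k - (x_{m+1} - x_n)`.
The partial sums of `γ_k u_k` are Cauchy, so the first term is small once `n` is large, and it
remains to see that the iterates barely move. Projection onto the box clamps each coordinate to
`[a_i, b_i]`, and a clamped walk on an interval whose increments have all block sums below
`η < b_i - a_i` stays within `2η` of its start: after it touches one end, its free motion is too
small to reach the other end, so every later push only returns it to the same end.
-/

open Filter Finset

section Clamp

variable {a b : ℝ}

theorem sq_sub_max_min_add_sq_le {z t : ℝ} (ht : t ∈ Set.Icc a b) :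
    (z - max a (min b z)) ^ 2 + (t - max a (min b z)) ^ 2 ≤ (z - t) ^ 2 := by
  obtain ⟨hat, htb⟩ := ht
  have hobtuse : (z - max a (min b z)) * (t - max a (min b z)) ≤ 0 := by
    rcases le_total z a with h | h
    · rw [min_eq_right (h.trans (hat.trans htb)), max_eq_left h]; nlinarith
    rcases le_total z b with h' | h'
    · simp [min_eq_right h', max_eq_right h]
    · rw [min_eq_left h', max_eq_right (hat.trans htb)]; nlinarith
  nlinarith

theorem abs_max_min_sub_le {y z : ℝ} (hy : y ∈ Set.Icc a b) :
    |max a (min b z) - y| ≤ |z - y| := by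
  simpa [Set.projIcc, hy.1, hy.2] using
    Set.abs_projIcc_sub_projIcc (h := hy.1.trans hy.2) (c := z) (d := y)

theorem max_min_eq_or_eq_of_ne {z : ℝ} (hne : max a (min b z) ≠ z) :
    max a (min b z) = a ∨ max a (min b z) = b := by
  rcases le_total z b with h | h
  · rw [min_eq_right h] at hne ⊢
    exact .inl ((max_choice a z).resolve_right hne)
  · rw [min_eq_left h]; exact max_choice a b

theorem max_min_eq_of_abs_sub_lt {y z : ℝ} (hy : y = a ∨ y = b) (hzy : |z - y| < b - a)
    (hne : max a (min b z) ≠ z) : max a (min b z) = y := by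
  rw [abs_lt] at hzy
  rcases le_total z a with h | h
  · rw [min_eq_right (by linarith), max_eq_left h]; rcases hy with rfl | rfl <;> linarith
  rcases le_total z b with h' | h'
  · simp [min_eq_right h', max_eq_right h] at hne
  · rw [min_eq_left h', max_eq_right (by linarith)]; rcases hy with rfl | rfl <;> linarith

variable {η : ℝ} {s c : ℕ → ℝ} {n M : ℕ}

/- `j` is the last time up to `t` at which the clamp was active (or `n` if it never was);
from `j` on the walk moves freely. -/
theorem exists_eq_add_sum_of_clamp_iterate (hη : η < b - a) (hs : s n ∈ Set.Icc a b)
    (hrec : ∀ k ∈ Ico n M, s (k + 1) = max a (min b (s k + c k)))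
    (hc : ∀ i j, n ≤ i → i ≤ j → j ≤ M → |∑ k ∈ Ico i j, c k| ≤ η) {t : ℕ} (hnt : n ≤ t)
    (htM : t ≤ M) :
    ∃ j ∈ Icc n t, (j = n ∨ s j = a ∨ s j = b) ∧ |s j - s n| ≤ η ∧
      s t = s j + ∑ k ∈ Ico j t, c k := by
  induction t, hnt using Nat.le_induction with
  | base => exact ⟨n, by simp, .inl rfl, by simpa using hc n n le_rfl le_rfl htM, by simp⟩
  | succ t hnt ih =>
    obtain ⟨j, hj, hjn, hjs, hst⟩ := ih (by omega)
    obtain ⟨hnj, hjt⟩ := mem_Icc.1 hj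
    have hfree : s t + c t = s j + ∑ k ∈ Ico j (t + 1), c k := by
      rw [sum_Ico_succ_top hjt, hst, add_assoc]
    have hfree_le : |s t + c t - s j| ≤ η := by
      simpa [hfree] using hc j (t + 1) hnj (by omega) htM
    have hnext := hrec t (mem_Ico.2 ⟨hnt, htM⟩)
    by_cases hfix : max a (min b (s t + c t)) = s t + c t
    · exact ⟨j, mem_Icc.2 ⟨hnj, by omega⟩, hjn, hjs, by rw [hnext, hfix, hfree]⟩
    refine ⟨t + 1, mem_Icc.2 ⟨by omega, le_rfl⟩, .inr ?_, ?_, by simp⟩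
    · rw [hnext]; exact max_min_eq_or_eq_of_ne hfix
    · rw [hnext]
      rcases hjn with rfl | hj_end
      · exact (abs_max_min_sub_le hs).trans hfree_le
      · rw [max_min_eq_of_abs_sub_lt hj_end (hfree_le.trans_lt hη) hfix]; exact hjs

theorem abs_sub_le_of_clamp_iterate (hη : η < b - a) (hs : s n ∈ Set.Icc a b)
    (hrec : ∀ k ∈ Ico n M, s (k + 1) = max a (min b (s k + c k)))
    (hc : ∀ i j, n ≤ i → i ≤ j → j ≤ M → |∑ k ∈ Ico i j, c k| ≤ η) (hnM : n ≤ M) :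
    |s M - s n| ≤ 2 * η := by
  obtain ⟨j, hj, -, hjs, hsM⟩ := exists_eq_add_sum_of_clamp_iterate hη hs hrec hc hnM le_rfl
  rw [hsM, add_sub_right_comm]
  calc _ ≤ |s j - s n| + |∑ k ∈ Ico j M, c k| := abs_add_le _ _
    _ ≤ η + η := add_le_add hjs (hc j M (mem_Icc.1 hj).1 (mem_Icc.1 hj).2 le_rfl)
    _ = 2 * η := by ring

end Clamp

theorem PiLp.norm_le_sum_norm_of_L2 {ι : Type*} [Fintype ι] {β : ι → Type*}
    [∀ i, SeminormedAddCommGroup (β i)] (x : PiLp 2 β) : ‖x‖ ≤ ∑ i, ‖x i‖ := by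
  refine (abs_le_of_sq_le_sq' ?_ (by positivity)).2
  rw [PiLp.norm_sq_eq_of_L2]
  exact sum_sq_le_sq_sum_of_nonneg fun _ _ => norm_nonneg _

namespace EuclideanSpace

variable {ι : Type*} [Fintype ι] {a b : ι → ℝ}

theorem apply_eq_max_min_of_forall_norm_sub_le {z p : EuclideanSpace ℝ ι}
    (hp : ∀ i, p i ∈ Set.Icc (a i) (b i))
    (hmin : ∀ w : EuclideanSpace ℝ ι, (∀ i, w i ∈ Set.Icc (a i) (b i)) → ‖z - p‖ ≤ ‖z - w‖)
    (i : ι) : p i = max (a i) (min (b i) (z i)) := by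
  let w : EuclideanSpace ℝ ι := WithLp.toLp 2 fun j => max (a j) (min (b j) (z j))
  have hw : ∀ j, w j ∈ Set.Icc (a j) (b j) := fun j =>
    ⟨le_max_left _ _, max_le ((hp j).1.trans (hp j).2) (min_le_left _ _)⟩
  have hpyth : ‖z - w‖ ^ 2 + ‖p - w‖ ^ 2 ≤ ‖z - p‖ ^ 2 := by
    simp only [real_norm_sq_eq, ← sum_add_distrib]
    exact sum_le_sum fun j _ => sq_sub_max_min_add_sq_le (hp j)
  have hpw : p = w := by
    have := pow_le_pow_left₀ (norm_nonneg _) (hmin w hw) 2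
    rw [← sub_eq_zero, ← norm_eq_zero]
    nlinarith [norm_nonneg (p - w)]
  rw [hpw]

theorem norm_sub_le_of_clamp_iterate {η : ℝ} (hη : ∀ i, η < b i - a i)
    {x v : ℕ → EuclideanSpace ℝ ι} {n M : ℕ} (hx : ∀ i, x n i ∈ Set.Icc (a i) (b i))
    (hrec : ∀ k ∈ Ico n M, ∀ i, x (k + 1) i = max (a i) (min (b i) (x k i + v k i)))
    (hv : ∀ i j, n ≤ i → i ≤ j → j ≤ M → ‖∑ k ∈ Ico i j, v k‖ ≤ η) (hnM : n ≤ M) :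
    ‖x M - x n‖ ≤ Fintype.card ι * (2 * η) := by
  have hcoord (i : ι) : |x M i - x n i| ≤ 2 * η :=
    abs_sub_le_of_clamp_iterate (s := fun k => x k i) (c := fun k => v k i) (hη i) (hx i)
      (fun k hk => hrec k hk i)
      (fun k l hk hkl hl => by
        simpa [WithLp.ofLp_sum] using (PiLp.norm_apply_le _ i).trans (hv k l hk hkl hl))
      hnM
  calc ‖x M - x n‖ ≤ ∑ i, ‖(x M - x n) i‖ := PiLp.norm_le_sum_norm_of_L2 _
    _ ≤ ∑ _i : ι, 2 * η := sum_le_sum fun i _ => by simpa using hcoord i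
    _ = Fintype.card ι * (2 * η) := by simp

end EuclideanSpace

theorem CauchySeq.exists_forall_norm_sum_Ico_lt {E : Type*} [SeminormedAddCommGroup E]
    {f : ℕ → E} (hf : CauchySeq fun n => ∑ k ∈ range n, f k) {η : ℝ} (hη : 0 < η) :
    ∃ N, ∀ i j, N ≤ i → i ≤ j → ‖∑ k ∈ Ico i j, f k‖ < η := by
  obtain ⟨N, hN⟩ := Metric.cauchySeq_iff.1 hf η hη
  exact ⟨N, fun i j hi hij => by
    simpa [sum_Ico_eq_sub _ hij, dist_eq_norm] using hN j (hi.trans hij) i hi⟩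

theorem cauchySeq_sum_range_of_tendsto_sum_Icc {E : Type*} [SeminormedAddCommGroup E]
    {f : ℕ → E} {L : E} (h : Tendsto (fun n => ∑ k ∈ Icc 1 n, f k) atTop (nhds L)) :
    CauchySeq fun n => ∑ k ∈ range n, f k := by
  have hshift : Tendsto (fun n => ∑ k ∈ range (n + 1), f k) atTop (nhds (f 0 + L)) := by
    simpa [← sum_range_add_sum_Ico f (Nat.le_add_left 1 _), Ico_add_one_right_eq_Icc] using
      h.const_add (f 0)
  exact ((tendsto_add_atTop_iff_nat 1).1 hshift).cauchySeq

theorem stmt5_general (d : ℕ) (γ : ℕ → ℝ) (u : ℕ → EuclideanSpace ℝ (Fin d))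
    (a b : Fin d → ℝ) (hab : ∀ i, a i < b i)
    (K : Set (EuclideanSpace ℝ (Fin d)))
    (hK : K = {z : EuclideanSpace ℝ (Fin d) | ∀ i, z i ∈ Set.Icc (a i) (b i)})
    (proj : EuclideanSpace ℝ (Fin d) → EuclideanSpace ℝ (Fin d))
    (hproj : ∀ z, proj z ∈ K ∧ ∀ w ∈ K, ‖z - proj z‖ ≤ ‖z - w‖)
    (hconv : ∃ L, Tendsto (fun n => ∑ k ∈ Finset.Icc 1 n, γ k • u k) atTop (nhds L))
    (x : ℕ → EuclideanSpace ℝ (Fin d))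
    (hrec : ∀ n, 1 ≤ n → x (n + 1) = proj (x n + γ n • u n))
    (P : ℕ → EuclideanSpace ℝ (Fin d))
    (hP : ∀ n, P n = x n + γ n • u n - x (n + 1)) :
    ∀ ε > (0:ℝ), ∃ δ > (0:ℝ), ∃ N : ℕ, ∀ n m : ℕ, N ≤ n → n ≤ m →
      (∑ k ∈ Finset.Icc n m, γ k) < δ → ‖∑ k ∈ Finset.Icc n m, P k‖ < ε := by
  intro ε hε
  have hsmall : ∀ᶠ η in nhds (0 : ℝ), (2 * d + 1) * η < ε ∧ ∀ i, η < b i - a i :=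
    ((continuous_const_mul _).tendsto' 0 0 (mul_zero _) |>.eventually (gt_mem_nhds hε)).and
      (eventually_all.2 fun i => gt_mem_nhds (sub_pos.2 (hab i)))
  obtain ⟨η, ⟨hηε, hηab⟩, hη⟩ :=
    ((hsmall.filter_mono (nhdsWithin_le_nhds (s := Set.Ioi 0))).and self_mem_nhdsWithin).exists
  obtain ⟨N, hN⟩ :=
    (cauchySeq_sum_range_of_tendsto_sum_Icc hconv.choose_spec).exists_forall_norm_sum_Ico_lt hη
  refine ⟨1, one_pos, N + 2, fun n m hn hnm _ => ?_⟩
  simp only [hK, Set.mem_ofPred_eq] at hproj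
  have hxn : ∀ i, x n i ∈ Set.Icc (a i) (b i) := by
    obtain ⟨k, rfl⟩ : ∃ k, n = k + 1 := ⟨n - 1, by omega⟩
    rw [hrec k (by omega)]
    exact (hproj _).1
  have hdisp : ‖x (m + 1) - x n‖ ≤ d * (2 * η) := by
    simpa using EuclideanSpace.norm_sub_le_of_clamp_iterate hηab hxn
      (fun k hk i => by
        rw [hrec k (by have := (mem_Ico.1 hk).1; omega)]
        exact EuclideanSpace.apply_eq_max_min_of_forall_norm_sub_le (hproj _).1 (hproj _).2 i)
      (fun k l hk hkl _ => (hN k l (by omega) hkl).le) (by omega)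
  have hsum : ∑ k ∈ Icc n m, P k = ∑ k ∈ Icc n m, γ k • u k - (x (m + 1) - x n) := by
    rw [← sum_Icc_sub hnm, ← sum_sub_distrib]
    exact sum_congr rfl fun k _ => by rw [hP]; abel
  calc ‖∑ k ∈ Icc n m, P k‖
      ≤ ‖∑ k ∈ Icc n m, γ k • u k‖ + ‖x (m + 1) - x n‖ := hsum ▸ norm_sub_le _ _
    _ < η + d * (2 * η) := by
        refine add_lt_add_of_lt_of_le ?_ hdisp
        simpa [Ico_add_one_right_eq_Icc] using hN n (m + 1) (by omega) (by omega)
    _ = (2 * d + 1) * η := by ring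
    _ < ε := hηε

/-- Deterministic core of the main equicontinuity theorem: control of the
accumulated projection residuals of the projected iteration on a hyperrectangle. -/
theorem stmt5 (d : ℕ) (γ : ℕ → ℝ) (u : ℕ → EuclideanSpace ℝ (Fin d))
    (a b : Fin d → ℝ) (hab : ∀ i, a i < b i)
    (K : Set (EuclideanSpace ℝ (Fin d)))
    (hK : K = {z : EuclideanSpace ℝ (Fin d) | ∀ i, z i ∈ Set.Icc (a i) (b i)})
    (proj : EuclideanSpace ℝ (Fin d) → EuclideanSpace ℝ (Fin d))
    (hproj : ∀ z, proj z ∈ K ∧ ∀ w ∈ K, ‖z - proj z‖ ≤ ‖z - w‖)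
    (hγpos : ∀ n, 0 < γ n) (hγ0 : Tendsto γ atTop (nhds 0))
    (hγdiv : Tendsto (fun n => ∑ k ∈ Finset.Icc 1 n, γ k) atTop atTop)
    (hconv : ∃ L, Tendsto (fun n => ∑ k ∈ Finset.Icc 1 n, γ k • u k) atTop (nhds L))
    (hγu : Tendsto (fun n => γ n * ‖u n‖) atTop (nhds 0))
    (x : ℕ → EuclideanSpace ℝ (Fin d)) (hx1 : x 1 ∈ K)
    (hrec : ∀ n, 1 ≤ n → x (n + 1) = proj (x n + γ n • u n))
    (P : ℕ → EuclideanSpace ℝ (Fin d))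
    (hP : ∀ n, P n = x n + γ n • u n - x (n + 1)) :
    ∀ ε > (0:ℝ), ∃ δ > (0:ℝ), ∃ N : ℕ, ∀ n m : ℕ, N ≤ n → n ≤ m →
      (∑ k ∈ Finset.Icc n m, γ k) < δ → ‖∑ k ∈ Finset.Icc n m, P k‖ < ε :=
  stmt5_general d γ u a b hab K hK proj hproj hconv x hrec P hP
end

section
/- Let (γ_n) be positive with γ_n → 0 and ∑γ_n = ∞, K = ∏_{i=1}^d [a_i,b_i], h : K → ℝ^d bounded by H, (r_n) a sequence in ℝ^d with r_n → 0, and (e_n) with ∑ γ_n e_n convergent. Define x_{n+1} = Π_K(x_n + γ_n(h(x_n) + e_n + r_n)) with x_1 ∈ K, and set t_n = ∑_{k=1}^n γ_k, X_1(t) = x_k on [t_{k-1}, t_k), X_n(t) = X_1(t + t_{n-1}). Then (X_n) is equicontinuous in the extended sense: for every ε > 0 and T > 0 there is δ > 0 with limsup_n |X_n(t) - X_n(s)| < ε whenever |t-s| < δ, s,t ≤ T. -/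
open Filter Finset

/-! The projection onto a box acts coordinatewise by clamping, and a clamped scalar recursion
`q (k + 1) = clamp (q k + s k)` started inside the interval moves at most twice the largest partial
sum of its increments over the window. Over a window of iterates spanning interpolation time `Δt`,
the increments `γ k • (h (x k) + r k)` add up to at most `(H + 1) Δt` once `‖r k‖ ≤ 1`, and the
noise increments `γ k • e k` add up to something small by the Cauchy criterion for `∑ γ k • e k`.
The times `s`, `v` of a shifted interpolation `X n` fall into iterates whose time gap is at most
`|v - s|` plus one step size, and the step sizes tend to `0`. -/

def euclideanBox {ι : Type*} (a b : ι → ℝ) : Set (EuclideanSpace ℝ ι) :=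
  {z | ∀ i, z i ∈ Set.Icc (a i) (b i)}

lemma abs_sub_max_min_le {a b z w : ℝ} (hw : w ∈ Set.Icc a b) :
    |z - max a (min b z)| ≤ |z - w| := by
  obtain ⟨ha, hb⟩ := hw
  rcases le_total z a with hza | haz
  · rw [min_eq_right (hza.trans (ha.trans hb)), max_eq_left hza,
      abs_of_nonpos (by linarith), abs_of_nonpos (by linarith)]
    linarith
  rcases le_total z b with hzb | hbz
  · rw [min_eq_right hzb, max_eq_right haz, sub_self, abs_zero]
    exact abs_nonneg _
  · rw [min_eq_left hbz, max_eq_right (ha.trans hb),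
      abs_of_nonneg (by linarith), abs_of_nonneg (by linarith)]
    linarith

lemma Convex.eq_of_forall_norm_sub_le {E : Type*} [NormedAddCommGroup E] [InnerProductSpace ℝ E]
    {K : Set E} (hK : Convex ℝ K) {z u v : E} (hu : u ∈ K) (hv : v ∈ K)
    (hu_min : ∀ w ∈ K, ‖z - u‖ ≤ ‖z - w‖) (hv_min : ∀ w ∈ K, ‖z - v‖ ≤ ‖z - w‖) : u = v := by
  have inner_nonpos {u : E} (hu : u ∈ K) (hmin : ∀ w ∈ K, ‖z - u‖ ≤ ‖z - w‖) :
      ∀ w ∈ K, inner ℝ (z - u) (w - u) ≤ 0 := by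
    have : Nonempty K := ⟨⟨u, hu⟩⟩
    have hbdd : BddBelow (Set.range fun w : K => ‖z - w‖) := ⟨0, by
      rintro _ ⟨w, rfl⟩
      exact norm_nonneg _⟩
    exact (norm_eq_iInf_iff_real_inner_le_zero hK hu).1 <|
      le_antisymm (le_ciInf fun w => hmin w w.2) (ciInf_le hbdd ⟨u, hu⟩)
  have hsum : inner ℝ (z - u) (v - u) + inner ℝ (z - v) (u - v) = ‖v - u‖ ^ 2 := by
    rw [← neg_sub v u, inner_neg_right, ← sub_eq_add_neg, ← inner_sub_left,
      sub_sub_sub_cancel_left, real_inner_self_eq_norm_sq]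
  have hzero : ‖v - u‖ = 0 := by
    nlinarith [inner_nonpos hu hu_min v hv, inner_nonpos hv hv_min u hu, norm_nonneg (v - u)]
  exact (sub_eq_zero.1 (norm_eq_zero.1 hzero)).symm

lemma convex_euclideanBox {ι : Type*} (a b : ι → ℝ) : Convex ℝ (euclideanBox a b) := by
  intro z hz w hw μ ν hμ hν hμν i
  simpa using convex_Icc (a i) (b i) (hz i) (hw i) hμ hν hμν

/-- The clamped recursion stays within `B` of the free one `q m + ∑ s`: clamping only ever moves
an iterate towards `[α, β]`, where `q m` lies. -/
lemma abs_sub_le_of_clamp_recursion {α β B : ℝ} {q s : ℕ → ℝ} {m p : ℕ} (hmp : m ≤ p)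
    (hq : q m ∈ Set.Icc α β) (hrec : ∀ k ∈ Ico m p, q (k + 1) = max α (min β (q k + s k)))
    (hB : ∀ j ∈ Icc m p, |∑ k ∈ Ico m j, s k| ≤ B) :
    |q p - q m| ≤ 2 * B := by
  have hdev : ∀ j, m ≤ j → j ≤ p → |q j - q m - ∑ k ∈ Ico m j, s k| ≤ B := by
    intro j hmj
    induction j, hmj using Nat.le_induction with
    | base => simpa using fun _ => (abs_nonneg _).trans (hB m (mem_Icc.2 ⟨le_rfl, hmp⟩))
    | succ j hmj ih =>
      intro hjp
      obtain ⟨ih_lo, ih_hi⟩ := abs_le.1 (ih (by omega))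
      obtain ⟨hS_lo, hS_hi⟩ := abs_le.1 (hB (j + 1) (mem_Icc.2 ⟨by omega, hjp⟩))
      rw [sum_Ico_succ_top hmj] at hS_lo hS_hi ⊢
      rw [hrec j (mem_Ico.2 ⟨hmj, hjp⟩), abs_le]
      constructor
      · have : q m + (∑ k ∈ Ico m j, s k + s j) - B ≤ min β (q j + s j) :=
          le_min (by linarith [hq.2]) (by linarith)
        linarith [le_max_right α (min β (q j + s j))]
      · have : max α (q j + s j) ≤ q m + (∑ k ∈ Ico m j, s k + s j) + B :=
          max_le (by linarith [hq.1]) (by linarith)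
        linarith [max_le_max_left α (min_le_right β (q j + s j))]
  obtain ⟨h_lo, h_hi⟩ := abs_le.1 (hdev p hmp le_rfl)
  obtain ⟨hS_lo, hS_hi⟩ := abs_le.1 (hB p (mem_Icc.2 ⟨hmp, le_rfl⟩))
  rw [abs_le]
  constructor <;> linarith

section EuclideanBox

variable {ι : Type*} [Fintype ι]

lemma EuclideanSpace.norm_le_norm_of_abs_apply_le {v w : EuclideanSpace ℝ ι}
    (h : ∀ i, |v i| ≤ |w i|) : ‖v‖ ≤ ‖w‖ := by
  simp only [EuclideanSpace.norm_eq, Real.norm_eq_abs]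
  exact Real.sqrt_le_sqrt <| sum_le_sum fun i _ => pow_le_pow_left₀ (abs_nonneg _) (h i) 2

lemma EuclideanSpace.norm_le_sqrt_card_mul {w : EuclideanSpace ℝ ι} {c : ℝ} (hc : 0 ≤ c)
    (h : ∀ i, |w i| ≤ c) : ‖w‖ ≤ √(Fintype.card ι) * c := by
  calc ‖w‖ ≤ √(∑ _i : ι, c ^ 2) := by
        rw [EuclideanSpace.norm_eq]
        gcongr with i
        rw [Real.norm_eq_abs]
        exact h i
    _ = √(Fintype.card ι) * c := by
        rw [sum_const, card_univ, nsmul_eq_mul, Real.sqrt_mul (by positivity), Real.sqrt_sq hc]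

lemma apply_eq_max_min_of_isNearest_euclideanBox {a b : ι → ℝ} (hab : ∀ i, a i ≤ b i)
    {z p : EuclideanSpace ℝ ι} (hp : p ∈ euclideanBox a b)
    (hp_min : ∀ w ∈ euclideanBox a b, ‖z - p‖ ≤ ‖z - w‖) (i : ι) :
    p i = max (a i) (min (b i) (z i)) := by
  set c : EuclideanSpace ℝ ι := WithLp.toLp 2 fun j => max (a j) (min (b j) (z j))
  have hc : c ∈ euclideanBox a b := fun j => ⟨le_max_left _ _, max_le (hab j) (min_le_left _ _)⟩
  have hc_min : ∀ w ∈ euclideanBox a b, ‖z - c‖ ≤ ‖z - w‖ := fun w hw =>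
    EuclideanSpace.norm_le_norm_of_abs_apply_le fun j => abs_sub_max_min_le (hw j)
  rw [(convex_euclideanBox a b).eq_of_forall_norm_sub_le hp hc hp_min hc_min]

lemma norm_sub_le_of_euclideanBox_recursion {a b : ι → ℝ}
    (hab : ∀ i, a i ≤ b i) {proj : EuclideanSpace ℝ ι → EuclideanSpace ℝ ι}
    (hproj : ∀ z, proj z ∈ euclideanBox a b ∧ ∀ w ∈ euclideanBox a b, ‖z - proj z‖ ≤ ‖z - w‖)
    {x y : ℕ → EuclideanSpace ℝ ι} {m p : ℕ} {B : ℝ} (hmp : m ≤ p) (hx : x m ∈ euclideanBox a b)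
    (hrec : ∀ k ∈ Ico m p, x (k + 1) = proj (x k + y k))
    (hB : ∀ j ∈ Icc m p, ‖∑ k ∈ Ico m j, y k‖ ≤ B) :
    ‖x p - x m‖ ≤ √(Fintype.card ι) * (2 * B) := by
  have hB0 : 0 ≤ B := (norm_nonneg _).trans (hB m (mem_Icc.2 ⟨le_rfl, hmp⟩))
  refine EuclideanSpace.norm_le_sqrt_card_mul (by positivity) fun i => ?_
  refine abs_sub_le_of_clamp_recursion (q := fun k => x k i) (s := fun k => y k i) hmp (hx i)
    (fun k hk => ?_) fun j hj => ?_
  · rw [hrec k hk]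
    exact apply_eq_max_min_of_isNearest_euclideanBox hab (hproj _).1 (hproj _).2 i
  · have := PiLp.norm_apply_le (∑ k ∈ Ico m j, y k) i
    rw [Real.norm_eq_abs, WithLp.ofLp_sum, Finset.sum_apply] at this
    exact this.trans (hB j hj)

end EuclideanBox

lemma sum_Ico_add_one_add_one_eq_sub {M : Type*} [AddCommGroup M] (f : ℕ → M) {m j : ℕ}
    (hmj : m ≤ j) : ∑ k ∈ Ico (m + 1) (j + 1), f k = ∑ k ∈ Icc 1 j, f k - ∑ k ∈ Icc 1 m, f k := by
  have hIcc : ∀ n, Icc 1 n = Ioc 0 n := fun n => Icc_add_one_left_eq_Ioc 0 n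
  rw [Ico_add_one_add_one_eq_Ioc, hIcc, hIcc, eq_sub_iff_add_eq',
    sum_Ioc_consecutive f (Nat.zero_le m) hmj]

lemma exists_le_lt_succ_of_tendsto_atTop {t : ℕ → ℝ} (ht : Tendsto t atTop atTop) {u : ℝ}
    (hu : t 0 ≤ u) : ∃ m, t m ≤ u ∧ u < t (m + 1) := by
  classical
  have hex : ∃ k, u < t k := (ht.eventually_gt_atTop u).exists
  obtain ⟨m, hm⟩ : ∃ m, Nat.find hex = m + 1 := Nat.exists_eq_succ_of_ne_zero fun h0 => by
    have := Nat.find_spec hex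
    rw [h0] at this
    linarith
  exact ⟨m, not_lt.1 (Nat.find_min hex (by omega)), hm ▸ Nat.find_spec hex⟩

lemma exists_interpolation_index {α : Type*} {t : ℕ → ℝ} {γ : ℕ → ℝ} {x : ℕ → α} {X : ℕ → ℝ → α}
    (hγ : ∀ k, 0 ≤ γ k) (ht : ∀ n, t n = ∑ k ∈ Icc 1 n, γ k) (htop : Tendsto t atTop atTop)
    (hX1 : ∀ k, 1 ≤ k → ∀ s : ℝ, t (k - 1) ≤ s → s < t k → X 1 s = x k)
    (hXn : ∀ n, 1 ≤ n → ∀ s : ℝ, X n s = X 1 (s + t (n - 1))) {n : ℕ} (hn : 1 ≤ n) {s : ℝ}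
    (hs : 0 ≤ s) :
    ∃ m, n - 1 ≤ m ∧ t m ≤ s + t (n - 1) ∧ s + t (n - 1) < t m + γ (m + 1) ∧
      X n s = x (m + 1) := by
  have hmono : Monotone t := fun i j hij => by
    rw [ht, ht]
    exact sum_le_sum_of_subset_of_nonneg (Icc_subset_Icc_right hij) fun k _ _ => hγ k
  have hstep : ∀ m, t (m + 1) = t m + γ (m + 1) := fun m => by
    rw [ht, ht, sum_Icc_succ_top (by omega)]
  obtain ⟨m, hm, hm'⟩ := exists_le_lt_succ_of_tendsto_atTop htop (u := s + t (n - 1))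
    (by linarith [hmono (Nat.zero_le (n - 1))])
  refine ⟨m, ?_, hm, hstep m ▸ hm', ?_⟩
  · by_contra! hlt
    linarith [hmono (show m + 1 ≤ n - 1 by omega)]
  · rw [hXn n hn, hX1 (m + 1) (by omega) _ (by simpa using hm) hm']

section Iterates

variable {ι : Type*} [Fintype ι] {a b : ι → ℝ} {proj h : EuclideanSpace ℝ ι → EuclideanSpace ℝ ι}
  {H : ℝ} {γ : ℕ → ℝ} {e r x : ℕ → EuclideanSpace ℝ ι}

lemma norm_iterate_sub_le (hab : ∀ i, a i ≤ b i)
    (hproj : ∀ z, proj z ∈ euclideanBox a b ∧ ∀ w ∈ euclideanBox a b, ‖z - proj z‖ ≤ ‖z - w‖)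
    (hH : ∀ z ∈ euclideanBox a b, ‖h z‖ ≤ H) (hγ : ∀ k, 0 ≤ γ k) {m p : ℕ} (hmp : m ≤ p)
    (hx : ∀ k, m ≤ k → x k ∈ euclideanBox a b)
    (hrec : ∀ k ∈ Ico m p, x (k + 1) = proj (x k + γ k • (h (x k) + e k + r k)))
    (hr : ∀ k ∈ Ico m p, ‖r k‖ ≤ 1) {η : ℝ}
    (he : ∀ j ∈ Icc m p, ‖∑ k ∈ Ico m j, γ k • e k‖ ≤ η) :
    ‖x p - x m‖ ≤ √(Fintype.card ι) * (2 * ((H + 1) * ∑ k ∈ Ico m p, γ k + η)) := by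
  refine norm_sub_le_of_euclideanBox_recursion hab hproj hmp (hx m le_rfl) hrec fun j hj => ?_
  obtain ⟨hmj, hjp⟩ := mem_Icc.1 hj
  have hdrift : ‖∑ k ∈ Ico m j, γ k • (h (x k) + r k)‖ ≤ (H + 1) * ∑ k ∈ Ico m p, γ k := by
    calc ‖∑ k ∈ Ico m j, γ k • (h (x k) + r k)‖
        ≤ ∑ k ∈ Ico m j, γ k * (H + 1) := by
          refine norm_sum_le_of_le _ fun k hk => ?_
          have hk' : k ∈ Ico m p := mem_Ico.2 ⟨(mem_Ico.1 hk).1, (mem_Ico.1 hk).2.trans_le hjp⟩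
          rw [norm_smul, Real.norm_of_nonneg (hγ k)]
          exact mul_le_mul_of_nonneg_left ((norm_add_le _ _).trans
            (add_le_add (hH _ (hx k (mem_Ico.1 hk).1)) (hr k hk'))) (hγ k)
      _ ≤ ∑ k ∈ Ico m p, γ k * (H + 1) :=
          sum_le_sum_of_subset_of_nonneg (Ico_subset_Ico_right hjp) fun k _ _ =>
            mul_nonneg (hγ k) (by linarith [(norm_nonneg _).trans (hH _ (hx m le_rfl))])
      _ = (H + 1) * ∑ k ∈ Ico m p, γ k := by rw [← sum_mul, mul_comm]
  have hsplit : ∑ k ∈ Ico m j, γ k • (h (x k) + e k + r k)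
      = ∑ k ∈ Ico m j, γ k • (h (x k) + r k) + ∑ k ∈ Ico m j, γ k • e k := by
    rw [← sum_add_distrib]
    exact sum_congr rfl fun k _ => by rw [← smul_add, add_right_comm]
  rw [hsplit]
  exact (norm_add_le _ _).trans (add_le_add hdrift (he j hj))

lemma eventually_norm_iterate_sub_le (hab : ∀ i, a i ≤ b i)
    (hproj : ∀ z, proj z ∈ euclideanBox a b ∧ ∀ w ∈ euclideanBox a b, ‖z - proj z‖ ≤ ‖z - w‖)
    (hH : ∀ z ∈ euclideanBox a b, ‖h z‖ ≤ H) (hγ : ∀ k, 0 ≤ γ k)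
    (hr : Tendsto r atTop (nhds 0))
    (he : ∃ L, Tendsto (fun n => ∑ k ∈ Icc 1 n, γ k • e k) atTop (nhds L))
    (hx : ∀ k, 1 ≤ k → x k ∈ euclideanBox a b)
    (hrec : ∀ n, 1 ≤ n → x (n + 1) = proj (x n + γ n • (h (x n) + e n + r n)))
    {t : ℕ → ℝ} (ht : ∀ n, t n = ∑ k ∈ Icc 1 n, γ k) {η : ℝ} (hη : 0 < η) :
    ∃ N, ∀ m p, N ≤ m → N ≤ p →
      ‖x (p + 1) - x (m + 1)‖ ≤ √(Fintype.card ι) * (2 * ((H + 1) * |t p - t m| + η)) := by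
  obtain ⟨L, hL⟩ := he
  obtain ⟨N₁, hN₁⟩ := Metric.cauchySeq_iff.1 hL.cauchySeq η hη
  obtain ⟨N₂, hN₂⟩ := eventually_atTop.1 (NormedAddGroup.tendsto_nhds_zero.1 hr 1 one_pos)
  refine ⟨max N₁ N₂, fun m p hm hp => ?_⟩
  wlog hmp : m ≤ p generalizing m p
  · rw [norm_sub_rev, abs_sub_comm]
    exact this p m hp hm (by omega)
  have hΔt : t p - t m = ∑ k ∈ Ico (m + 1) (p + 1), γ k := by
    rw [ht, ht, sum_Ico_add_one_add_one_eq_sub _ hmp]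
  rw [abs_of_nonneg (hΔt ▸ sum_nonneg fun k _ => hγ k), hΔt]
  refine norm_iterate_sub_le hab hproj hH hγ (by omega) (fun k hk => hx k (by omega))
    (fun k hk => hrec k (by rw [mem_Ico] at hk; omega))
    (fun k hk => (hN₂ k (by rw [mem_Ico] at hk; omega)).le) fun j hj => ?_
  obtain ⟨j, rfl⟩ : ∃ j', j = j' + 1 := ⟨j - 1, by rw [mem_Icc] at hj; omega⟩
  rw [sum_Ico_add_one_add_one_eq_sub _ (by rw [mem_Icc] at hj; omega), ← dist_eq_norm]
  exact (hN₁ _ (by rw [mem_Icc] at hj; omega) _ (by omega)).le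

lemma eventually_norm_interpolation_sub_le (hab : ∀ i, a i ≤ b i)
    (hproj : ∀ z, proj z ∈ euclideanBox a b ∧ ∀ w ∈ euclideanBox a b, ‖z - proj z‖ ≤ ‖z - w‖)
    (hH : ∀ z ∈ euclideanBox a b, ‖h z‖ ≤ H) (hγ : ∀ k, 0 ≤ γ k)
    (hγ0 : Tendsto γ atTop (nhds 0)) (hr : Tendsto r atTop (nhds 0))
    (he : ∃ L, Tendsto (fun n => ∑ k ∈ Icc 1 n, γ k • e k) atTop (nhds L))
    (hx : ∀ k, 1 ≤ k → x k ∈ euclideanBox a b)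
    (hrec : ∀ n, 1 ≤ n → x (n + 1) = proj (x n + γ n • (h (x n) + e n + r n)))
    {t : ℕ → ℝ} (ht : ∀ n, t n = ∑ k ∈ Icc 1 n, γ k) (htop : Tendsto t atTop atTop)
    {X : ℕ → ℝ → EuclideanSpace ℝ ι}
    (hX1 : ∀ k, 1 ≤ k → ∀ s : ℝ, t (k - 1) ≤ s → s < t k → X 1 s = x k)
    (hXn : ∀ n, 1 ≤ n → ∀ s : ℝ, X n s = X 1 (s + t (n - 1))) {η δ : ℝ} (hη : 0 < η)
    (hδ : 0 < δ) :
    ∃ N, ∀ n ≥ N, ∀ s v : ℝ, 0 ≤ s → 0 ≤ v → |v - s| < δ →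
      ‖X n v - X n s‖ ≤ √(Fintype.card ι) * (2 * ((H + 1) * (2 * δ) + η)) := by
  obtain ⟨N₁, hN₁⟩ := eventually_norm_iterate_sub_le hab hproj hH hγ hr he hx hrec ht hη
  obtain ⟨N₂, hN₂⟩ := eventually_atTop.1 (hγ0.eventually (ge_mem_nhds hδ))
  refine ⟨N₁ + N₂ + 1, fun n hn s v hs hv hsv => ?_⟩
  obtain ⟨m, hnm, hm, hm', hXs⟩ :=
    exists_interpolation_index hγ ht htop hX1 hXn (by omega : 1 ≤ n) hs
  obtain ⟨p, hnp, hp, hp', hXv⟩ :=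
    exists_interpolation_index hγ ht htop hX1 hXn (by omega : 1 ≤ n) hv
  have hΔt : |t p - t m| ≤ 2 * δ := by
    have := hN₂ (m + 1) (by omega)
    have := hN₂ (p + 1) (by omega)
    rw [abs_le]
    constructor <;> linarith [abs_lt.1 hsv]
  have hH1 : 0 ≤ H + 1 := by linarith [(norm_nonneg _).trans (hH _ (hx 1 le_rfl))]
  rw [hXs, hXv]
  refine (hN₁ m p (by omega) (by omega)).trans ?_
  gcongr

end Iterates

/-- Equicontinuity in the extended sense of the shifted interpolations of the
projected stochastic approximation iterates (deterministic version). -/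
theorem stmt6 (d : ℕ) (γ : ℕ → ℝ)
    (e r : ℕ → EuclideanSpace ℝ (Fin d))
    (a b : Fin d → ℝ) (hab : ∀ i, a i < b i)
    (K : Set (EuclideanSpace ℝ (Fin d)))
    (hK : K = {z : EuclideanSpace ℝ (Fin d) | ∀ i, z i ∈ Set.Icc (a i) (b i)})
    (hfun : EuclideanSpace ℝ (Fin d) → EuclideanSpace ℝ (Fin d))
    (H : ℝ) (hH : ∀ z ∈ K, ‖hfun z‖ ≤ H)
    (hγpos : ∀ n, 0 < γ n) (hγ0 : Tendsto γ atTop (nhds 0))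
    (hγdiv : Tendsto (fun n => ∑ k ∈ Finset.Icc 1 n, γ k) atTop atTop)
    (hr : Tendsto r atTop (nhds 0))
    (he : ∃ L, Tendsto (fun n => ∑ k ∈ Finset.Icc 1 n, γ k • e k) atTop (nhds L))
    (proj : EuclideanSpace ℝ (Fin d) → EuclideanSpace ℝ (Fin d))
    (hproj : ∀ z, proj z ∈ K ∧ ∀ w ∈ K, ‖z - proj z‖ ≤ ‖z - w‖)
    (x : ℕ → EuclideanSpace ℝ (Fin d)) (hx1 : x 1 ∈ K)
    (hrec : ∀ n, 1 ≤ n → x (n + 1) = proj (x n + γ n • (hfun (x n) + e n + r n)))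
    (t : ℕ → ℝ) (ht : ∀ n, t n = ∑ k ∈ Finset.Icc 1 n, γ k)
    (X : ℕ → ℝ → EuclideanSpace ℝ (Fin d))
    (hX1 : ∀ k, 1 ≤ k → ∀ s : ℝ, t (k - 1) ≤ s → s < t k → X 1 s = x k)
    (hXn : ∀ n, 1 ≤ n → ∀ s : ℝ, X n s = X 1 (s + t (n - 1))) :
    ∀ ε > (0:ℝ), ∀ T > (0:ℝ), ∃ δ > (0:ℝ), ∀ s v : ℝ, 0 ≤ s → 0 ≤ v →
      s ≤ T → v ≤ T → |v - s| < δ →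
      Filter.limsup (fun n => ‖X n v - X n s‖) atTop < ε := by
  intro ε hε T _
  subst hK
  have hxK : ∀ k, 1 ≤ k → x k ∈ euclideanBox a b := fun k hk => by
    induction k, hk using Nat.le_induction with
    | base => exact hx1
    | succ k hk _ => exact hrec k hk ▸ (hproj _).1
  have hH0 : 0 ≤ H := (norm_nonneg _).trans (hH _ hx1)
  have htop : Tendsto t atTop atTop := (funext ht : t = _) ▸ hγdiv
  set η := ε / (8 * (√d + 1)) with hη_def
  have hη : 0 < η := by positivity
  obtain ⟨N, hN⟩ := eventually_norm_interpolation_sub_le (fun i => (hab i).le) hproj hH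
    (fun k => (hγpos k).le) hγ0 hr he hxK hrec ht htop hX1 hXn hη
    (show 0 < η / (H + 1) by positivity)
  refine ⟨η / (H + 1), by positivity, fun s v hs hv _ _ hsv => ?_⟩
  have hbound_eq : √(Fintype.card (Fin d)) * (2 * ((H + 1) * (2 * (η / (H + 1))) + η))
      = 6 * (√d * η) := by
    rw [Fintype.card_fin]
    field_simp
    ring
  have hη_eq : (√d + 1) * η = ε / 8 := by
    rw [hη_def]
    field_simp
  refine (limsup_le_of_le (isCoboundedUnder_le_of_le atTop fun n => norm_nonneg _)
    (eventually_atTop.2 ⟨N, fun n hn => hN n hn s v hs hv hsv⟩)).trans_lt ?_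
  nlinarith
end

section
/- Let K ⊆ ℝ^d be a nonempty closed convex set, a ∈ K, and X : ℝ → ℝ^d continuous with X(t₀) = a. Then ⋂_{δ>0} conv( ⋃_{τ ∈ [t₀-δ, t₀+δ]} N_K(X(τ)) ∩ B̄(0,M) ) ⊆ N_K(a) for every M > 0, where conv denotes convex hull and B̄(0,M) the closed ball of radius M. -/
/-!
A normal vector `v` at `x` with `‖v‖ ≤ M` satisfies `⟪v, y - c⟫ ≥ -M ‖x - y‖` for every `c ∈ K`,
i.e. it is normal at `y` up to an error `M ‖x - y‖`. For fixed `c` this is a closed half-space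
condition on `v`, so it passes to convex combinations. By continuity of `X`, the points `X τ` with
`τ` close to `t₀` are within any prescribed `η` of `X t₀`, and letting `η → 0` gives normality
at `X t₀`.
-/

open Set Filter Topology Metric
open scoped RealInnerProductSpace

variable {E : Type*} [NormedAddCommGroup E] [InnerProductSpace ℝ E]

def normalCone (K : Set E) (x : E) : Set E :=
  {v | ∀ c ∈ K, 0 ≤ ⟪v, x - c⟫}

lemma convex_setOf_le_inner (r : ℝ) (w : E) : Convex ℝ {v : E | r ≤ ⟪v, w⟫} :=
  convex_halfSpace_ge ⟨fun x y => inner_add_left x y w, fun r x => real_inner_smul_left x w r⟩ r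

lemma neg_mul_norm_le_inner_of_mem_normalCone {K : Set E} {x y v c : E} {M : ℝ}
    (hv : v ∈ normalCone K x) (hvM : ‖v‖ ≤ M) (hc : c ∈ K) :
    -(M * ‖x - y‖) ≤ ⟪v, y - c⟫ :=
  calc -(M * ‖x - y‖) ≤ -(‖v‖ * ‖x - y‖) := by gcongr
    _ ≤ -⟪v, x - y⟫ := neg_le_neg (real_inner_le_norm v (x - y))
    _ ≤ ⟪v, x - c⟫ - ⟪v, x - y⟫ := by linarith [hv c hc]
    _ = ⟪v, y - c⟫ := by rw [← inner_sub_right, sub_sub_sub_cancel_left]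

lemma convexHull_iUnion_normalCone_inter_closedBall_subset {ι : Type*} {K : Set E}
    {X : ι → E} {s : Set ι} {y c : E} {M η : ℝ} (hc : c ∈ K)
    (hXs : ∀ τ ∈ s, ‖X τ - y‖ ≤ η) :
    convexHull ℝ (⋃ τ ∈ s, normalCone K (X τ) ∩ closedBall 0 M) ⊆
      {v | -(M * η) ≤ ⟪v, y - c⟫} := by
  refine convexHull_min ?_ (convex_setOf_le_inner _ _)
  simp only [iUnion_subset_iff]
  rintro τ hτ v ⟨hv, hvM⟩
  rw [mem_closedBall_zero_iff] at hvM
  have hM : 0 ≤ M := (norm_nonneg v).trans hvM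
  calc -(M * η) ≤ -(M * ‖X τ - y‖) := by gcongr; exact hXs τ hτ
    _ ≤ ⟪v, y - c⟫ := neg_mul_norm_le_inner_of_mem_normalCone hv hvM hc

theorem iInter_convexHull_normalCone_inter_closedBall_subset {α : Type*} [PseudoMetricSpace α]
    {K : Set E} {X : α → E} {t₀ : α} (hX : ContinuousAt X t₀) (M : ℝ) :
    ⋂ δ > (0 : ℝ), convexHull ℝ (⋃ τ ∈ closedBall t₀ δ, normalCone K (X τ) ∩ closedBall 0 M) ⊆
      normalCone K (X t₀) := by
  intro v hv c hc
  simp only [mem_iInter₂] at hv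
  have hη : ∀ η > 0, -(M * η) ≤ ⟪v, X t₀ - c⟫ := by
    intro η hη
    obtain ⟨δ, hδ, hXδ⟩ :=
      nhds_basis_closedBall.eventually_iff.mp (hX.eventually (closedBall_mem_nhds (X t₀) hη))
    exact convexHull_iUnion_normalCone_inter_closedBall_subset hc
      (fun τ hτ => mem_closedBall_iff_norm.mp (hXδ hτ)) (hv δ hδ)
  have hlim : Tendsto (fun η : ℝ => -(M * η)) (𝓝[>] 0) (𝓝 0) :=
    tendsto_nhdsWithin_of_tendsto_nhds (Continuous.tendsto' (by fun_prop) 0 0 (by simp))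
  exact le_of_tendsto hlim (eventually_nhdsWithin_of_forall hη)

theorem stmt16_general (d : ℕ) (K : Set (EuclideanSpace ℝ (Fin d)))
    (a : EuclideanSpace ℝ (Fin d))
    (X : ℝ → EuclideanSpace ℝ (Fin d)) (hX : Continuous X)
    (t₀ : ℝ) (hXt : X t₀ = a) (M : ℝ) :
    (⋂ δ > (0:ℝ), convexHull ℝ
        (⋃ τ ∈ Set.Icc (t₀ - δ) (t₀ + δ),
          {v : EuclideanSpace ℝ (Fin d) | ∀ c ∈ K, (0:ℝ) ≤ @inner ℝ _ _ v (X τ - c)}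
            ∩ Metric.closedBall 0 M)) ⊆
      {v : EuclideanSpace ℝ (Fin d) | ∀ c ∈ K, (0:ℝ) ≤ @inner ℝ _ _ v (a - c)} := by
  subst hXt
  simp_rw [← Real.closedBall_eq_Icc]
  exact iInter_convexHull_normalCone_inter_closedBall_subset hX.continuousAt M

/-- Localized consequence of outer semicontinuity of the normal cone map:
bounded convex combinations of normal vectors at nearby points of a continuous
trajectory lie in the normal cone at the point. -/
theorem stmt16 (d : ℕ) (K : Set (EuclideanSpace ℝ (Fin d)))
    (hne : K.Nonempty) (hcl : IsClosed K) (hconv : Convex ℝ K)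
    (a : EuclideanSpace ℝ (Fin d)) (haK : a ∈ K)
    (X : ℝ → EuclideanSpace ℝ (Fin d)) (hX : Continuous X)
    (t₀ : ℝ) (hXt : X t₀ = a) (M : ℝ) (hM : 0 < M) :
    (⋂ δ > (0:ℝ), convexHull ℝ
        (⋃ τ ∈ Set.Icc (t₀ - δ) (t₀ + δ),
          {v : EuclideanSpace ℝ (Fin d) | ∀ c ∈ K, (0:ℝ) ≤ @inner ℝ _ _ v (X τ - c)}
            ∩ Metric.closedBall 0 M)) ⊆
      {v : EuclideanSpace ℝ (Fin d) | ∀ c ∈ K, (0:ℝ) ≤ @inner ℝ _ _ v (a - c)} :=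
  stmt16_general d K a X hX t₀ hXt M
end
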